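/- Let Ω: X ↷ Y be 1-quasilinear with dense domain and Ω* its adjoint. Then X*⊕_{Ω*} Y* = J*((Y⊕_Ω X)*), and the operator V = (J*)⁻¹∘W (W the formal identity) is an isomorphism from X*⊕_{Ω*} Y* onto (Y⊕_Ω X)*. -/
import Mathlib


noncomputable section

open scoped Classical BigOperators

section Defs

variable {X Y S : Type*} [NormedAddCommGroup X] [NormedSpace ℝ X]
  [NormedAddCommGroup Y] [NormedSpace ℝ Y] [AddCommGroup S] [Module ℝ S]

/-- The norm of `σ ∈ S` viewed as an element of `Y` through the embedding `ι`
(junk value `0` if `σ` is not in the image of `Y`). -/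
noncomputable def Ynorm (ι : Y →ₗ[ℝ] S) (σ : S) : ℝ :=
  if h : ∃ y : Y, ι y = σ then ‖Classical.choose h‖ else 0

/-- `Ω : X ↷ Y` is quasilinear with ambient space `S` and constant `C`. -/
def IsQL (ι : Y →ₗ[ℝ] S) (Ω : X → S) (C : ℝ) : Prop :=
  (∀ (c : ℝ) (x : X), Ω (c • x) = c • Ω x) ∧
  ∀ x z : X, (∃ y : Y, ι y = Ω (x + z) - Ω x - Ω z) ∧
    Ynorm ι (Ω (x + z) - Ω x - Ω z) ≤ C * (‖x‖ + ‖z‖)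

/-- `Ω : X ↷ Y` is `1`-quasilinear with ambient space `S` and constant `C`. -/
def IsOneQL (ι : Y →ₗ[ℝ] S) (Ω : X → S) (C : ℝ) : Prop :=
  (∀ (c : ℝ) (x : X), Ω (c • x) = c • Ω x) ∧
  ∀ (n : ℕ) (f : Fin n → X),
    (∃ y : Y, ι y = Ω (∑ i, f i) - ∑ i, Ω (f i)) ∧
      Ynorm ι (Ω (∑ i, f i) - ∑ i, Ω (f i)) ≤ C * ∑ i, ‖f i‖

/-- The twisted sum `Y ⊕_Ω X = {(β, x) : β - Ωx ∈ Y}`, as a subset of `S × X`. -/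
def TwSum (ι : Y →ₗ[ℝ] S) (Ω : X → S) : Set (S × X) :=
  {p | ∃ y : Y, ι y = p.1 - Ω p.2}

/-- The quasinorm `‖(β, x)‖_Ω = ‖β - Ωx‖_Y + ‖x‖_X` of the twisted sum. -/
noncomputable def tnorm (ι : Y →ₗ[ℝ] S) (Ω : X → S) (p : S × X) : ℝ :=
  Ynorm ι (p.1 - Ω p.2) + ‖p.2‖

/-- `Dom Ω = {x ∈ X : Ωx ∈ Y}`. -/
def QDom (ι : Y →ₗ[ℝ] S) (Ω : X → S) : Set X :=
  {x | ∃ y : Y, ι y = Ω x}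

/-- `‖x‖_D = ‖x‖_X + ‖Ωx‖_Y`. -/
noncomputable def domNorm (ι : Y →ₗ[ℝ] S) (Ω : X → S) (x : X) : ℝ :=
  ‖x‖ + Ynorm ι (Ω x)

/-- `Ran Ω = {β ∈ S : ∃ x ∈ X, β - Ωx ∈ Y}`. -/
def QRan (ι : Y →ₗ[ℝ] S) (Ω : X → S) : Set S :=
  {σ | ∃ x : X, (σ, x) ∈ TwSum ι Ω}

/-- `‖β‖_R = inf {‖(β, x)‖_Ω : (β, x) ∈ Y ⊕_Ω X}`. -/
noncomputable def ranNorm (ι : Y →ₗ[ℝ] S) (Ω : X → S) (σ : S) : ℝ :=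
  sInf (tnorm ι Ω '' {p : S × X | p.1 = σ ∧ p ∈ TwSum ι Ω})

end Defs

section Helpers

variable {X Y S : Type*} [NormedAddCommGroup X] [NormedSpace ℝ X]
  [NormedAddCommGroup Y] [NormedSpace ℝ Y] [AddCommGroup S] [Module ℝ S]

lemma Ynorm_eq (ι : Y →ₗ[ℝ] S) (hinj : Function.Injective ι) (y : Y) :
    Ynorm ι (ι y) = ‖y‖ := by
  have h : ∃ y' : Y, ι y' = ι y := ⟨y, rfl⟩
  rw [Ynorm, dif_pos h, hinj (Classical.choose_spec h)]

lemma Ynorm_nonneg' (ι : Y →ₗ[ℝ] S) (σ : S) : 0 ≤ Ynorm ι σ := by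
  rw [Ynorm]; split <;> positivity

lemma Ynorm_zero' (ι : Y →ₗ[ℝ] S) (hinj : Function.Injective ι) :
    Ynorm ι (0 : S) = 0 := by
  simpa using Ynorm_eq ι hinj 0

/-- The core density estimate: a bounded functional on the twisted sum is controlled
on the "diagonal" `(Ω x, x)` by its behaviour on `(Ω z, z)` for `z ∈ Dom Ω` and on
`(ι y, 0)`. -/
lemma core_estimate (ι : Y →ₗ[ℝ] S) (hinj : Function.Injective ι) (Ω : X → S) (C : ℝ)
    (hql2 : ∀ x z : X, (∃ y : Y, ι y = Ω (x + z) - Ω x - Ω z) ∧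
      Ynorm ι (Ω (x + z) - Ω x - Ω z) ≤ C * (‖x‖ + ‖z‖))
    (hdense : ∀ x : X, ∀ ε > (0 : ℝ), ∃ z ∈ QDom ι Ω, ‖x - z‖ < ε)
    (F : S × X →ₗ[ℝ] ℝ) (Mz Mg MF : ℝ) (hMz : 0 ≤ Mz) (hMg : 0 ≤ Mg)
    (hz : ∀ z ∈ QDom ι Ω, |F (Ω z, z)| ≤ Mz * ‖z‖)
    (hy : ∀ y : Y, |F (ι y, 0)| ≤ Mg * ‖y‖)
    (hr : ∀ r : X, |F (Ω r, r)| ≤ MF * ‖r‖)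
    (x : X) : |F (Ω x, x)| ≤ (Mz + Mg * |C|) * ‖x‖ := by
  refine le_of_forall_pos_le_add fun ε hε => ?_
  set D : ℝ := Mz + 2 * Mg * |C| + |MF| + 1 with hD
  have hDpos : 0 < D := by positivity
  obtain ⟨z, hzdom, hzx⟩ := hdense x (ε / D) (by positivity)
  set r : X := x - z with hrdef
  have hzr : z + r = x := by rw [hrdef]; abel
  obtain ⟨y', hy'⟩ := (hql2 z r).1
  have hy'norm : ‖y'‖ ≤ |C| * (‖z‖ + ‖r‖) := by
    have h2 := (hql2 z r).2
    rw [← hy', Ynorm_eq ι hinj] at h2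
    have hnn : (0:ℝ) ≤ ‖z‖ + ‖r‖ := by positivity
    nlinarith [le_abs_self C]
  have hsplit : ((Ω x, x) : S × X) = (ι y', 0) + (Ω z, z) + (Ω r, r) := by
    have h1 : Ω x = ι y' + Ω z + Ω r := by rw [hy', hzr]; abel
    have h2 : x = 0 + z + r := by rw [hrdef]; abel
    simp only [Prod.mk_add_mk]
    rw [← h1, ← h2]
  have hrε : ‖r‖ ≤ ε / D := le_of_lt hzx
  have hzn : ‖z‖ ≤ ‖x‖ + ‖r‖ := by
    have : z = x - r := by rw [hrdef]; abel
    rw [this]; exact norm_sub_le x r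
  have hbound : |F (Ω x, x)| ≤ Mg * ‖y'‖ + Mz * ‖z‖ + MF * ‖r‖ := by
    rw [hsplit, map_add, map_add]
    refine (abs_add_three _ _ _).trans ?_
    gcongr
    · exact hy y'
    · exact hz z hzdom
    · exact hr r
  have hεD : D * (ε / D) = ε := mul_div_cancel₀ ε (ne_of_gt hDpos)
  have h1 : Mg * ‖y'‖ ≤ Mg * |C| * (‖z‖ + ‖r‖) := by
    calc Mg * ‖y'‖ ≤ Mg * (|C| * (‖z‖ + ‖r‖)) := mul_le_mul_of_nonneg_left hy'norm hMg
    _ = Mg * |C| * (‖z‖ + ‖r‖) := by ring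
  have hrnn : (0:ℝ) ≤ ‖r‖ := norm_nonneg r
  have hεDnn : (0:ℝ) ≤ ε / D := by positivity
  have h2 : Mz * ‖z‖ ≤ Mz * ‖x‖ + Mz * (ε / D) := by nlinarith
  have h3 : MF * ‖r‖ ≤ |MF| * (ε / D) :=
    mul_le_mul (le_abs_self MF) hrε hrnn (abs_nonneg MF)
  have h4 : Mg * |C| * (‖z‖ + ‖r‖) ≤ Mg * |C| * ‖x‖ + 2 * Mg * |C| * (ε / D) := by
    have hnn : (0:ℝ) ≤ Mg * |C| := by positivity
    nlinarith
  nlinarith [hbound]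

end Helpers

/-- Let `Ω : X ↷ Y` be `1`-quasilinear with dense domain and `Ω*` its
adjoint, `Ω* y* := x ↦ B y* (0, x)` for a bounded homogeneous selection `B` of `ι₁*`.
Then `X* ⊕_{Ω*} Y* = J*((Y ⊕_Ω X)*)` and the operator `V = (J*)⁻¹ ∘ W` (`W` the formal
identity) is an isomorphism of `X* ⊕_{Ω*} Y*` onto `(Y ⊕_Ω X)*`. Functionals on the
twisted sum are represented as linear functionals on `S × X` bounded w.r.t. `‖·‖_Ω`;
elements of `(Dom Ω)*` as linear functionals on `X` bounded w.r.t. `‖·‖_D` on `Dom Ω`;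
`J* F = (F ∘ ι₂, F ∘ ι₁)`. -/
theorem stmt12 {X Y S : Type*} [NormedAddCommGroup X] [NormedSpace ℝ X] [CompleteSpace X]
    [NormedAddCommGroup Y] [NormedSpace ℝ Y] [CompleteSpace Y]
    [AddCommGroup S] [Module ℝ S]
    (ι : Y →ₗ[ℝ] S) (hinj : Function.Injective ι)
    (Ω : X → S) (C : ℝ) (hq : IsOneQL ι Ω C)
    (hdense : ∀ x : X, ∀ ε > (0 : ℝ), ∃ z ∈ QDom ι Ω, ‖x - z‖ < ε)
    (B : (Y →L[ℝ] ℝ) → (S × X →ₗ[ℝ] ℝ)) (K : ℝ) (hK : 0 < K)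
    (hBhom : ∀ (c : ℝ) (g : Y →L[ℝ] ℝ), B (c • g) = c • B g)
    (hBsel : ∀ (g : Y →L[ℝ] ℝ) (y : Y), B g (ι y, (0 : X)) = g y)
    (hBbdd : ∀ (g : Y →L[ℝ] ℝ), ∀ p ∈ TwSum ι Ω, |B g p| ≤ K * ‖g‖ * tnorm ι Ω p) :
    -- X* ⊕_{Ω*} Y* = J*((Y ⊕_Ω X)*):
    (∀ (α : X →ₗ[ℝ] ℝ) (g : Y →L[ℝ] ℝ),
      (∃ Mα : ℝ, ∀ x ∈ QDom ι Ω, |α x| ≤ Mα * domNorm ι Ω x) →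
      (((∃ M : ℝ, ∀ x ∈ QDom ι Ω, |α x - B g ((0 : S), x)| ≤ M * ‖x‖)) ↔
        (∃ F : S × X →ₗ[ℝ] ℝ,
          (∃ M' : ℝ, ∀ p ∈ TwSum ι Ω, |F p| ≤ M' * tnorm ι Ω p) ∧
          (∀ x ∈ QDom ι Ω, F ((0 : S), x) = α x) ∧
          (∀ y : Y, F (ι y, (0 : X)) = g y)))) ∧
    -- V is well defined (J* is injective on bounded functionals):
    (∀ F₁ F₂ : S × X →ₗ[ℝ] ℝ,
      (∃ M : ℝ, ∀ p ∈ TwSum ι Ω, |F₁ p| ≤ M * tnorm ι Ω p) →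
      (∃ M : ℝ, ∀ p ∈ TwSum ι Ω, |F₂ p| ≤ M * tnorm ι Ω p) →
      (∀ x ∈ QDom ι Ω, F₁ ((0 : S), x) = F₂ ((0 : S), x)) →
      (∀ y : Y, F₁ (ι y, (0 : X)) = F₂ (ι y, (0 : X))) →
      ∀ p ∈ TwSum ι Ω, F₁ p = F₂ p) ∧
    -- V is an isomorphism: two-sided norm estimates between
    -- ‖(α, g)‖_{Ω*} = ‖α - Ω*g‖_{X*} + ‖g‖ and the norm of F = V(α, g)
    (∃ c > (0 : ℝ), ∀ (α : X →ₗ[ℝ] ℝ) (g : Y →L[ℝ] ℝ) (F : S × X →ₗ[ℝ] ℝ)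
        (M MF : ℝ), 0 ≤ M → 0 ≤ MF →
      (∀ x ∈ QDom ι Ω, |α x - B g ((0 : S), x)| ≤ M * ‖x‖) →
      (∀ p ∈ TwSum ι Ω, |F p| ≤ MF * tnorm ι Ω p) →
      (∀ x ∈ QDom ι Ω, F ((0 : S), x) = α x) →
      (∀ y : Y, F (ι y, (0 : X)) = g y) →
      (∀ p ∈ TwSum ι Ω, |F p| ≤ c * (M + ‖g‖) * tnorm ι Ω p) ∧
      (∃ M₀ : ℝ, M₀ ≤ c * (MF + ‖g‖) ∧
        ∀ x ∈ QDom ι Ω, |α x - B g ((0 : S), x)| ≤ M₀ * ‖x‖)) := by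

  obtain ⟨hhom, hql⟩ := hq
  have hΩ0 : Ω 0 = 0 := by simpa using hhom 0 0
  have hql2 : ∀ x z : X, (∃ y : Y, ι y = Ω (x + z) - Ω x - Ω z) ∧
      Ynorm ι (Ω (x + z) - Ω x - Ω z) ≤ C * (‖x‖ + ‖z‖) := by
    intro x z
    have h := hql 2 ![x, z]
    simpa [Fin.sum_univ_two, sub_sub] using h
  have hYnn : ∀ σ : S, 0 ≤ Ynorm ι σ := Ynorm_nonneg' ι
  have htw_diag : ∀ z : X, ((Ω z, z) : S × X) ∈ TwSum ι Ω := fun z => ⟨0, by simp⟩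
  have htn_diag : ∀ z : X, tnorm ι Ω (Ω z, z) = ‖z‖ := by
    intro z
    simp [tnorm, Ynorm_zero' ι hinj]
  have hdiag : ∀ (F : S × X →ₗ[ℝ] ℝ) (z : X) (yz : Y), ι yz = Ω z →
      F (Ω z, z) = F (ι yz, 0) + F ((0:S), z) := by
    intro F z yz hyz
    have h : ((Ω z, z) : S × X) = (ι yz, 0) + ((0:S), z) := by
      simp [Prod.ext_iff, hyz]
    rw [h, map_add]
  have hback : ∀ (α : X →ₗ[ℝ] ℝ) (g : Y →L[ℝ] ℝ) (F : S × X →ₗ[ℝ] ℝ) (MF : ℝ),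
      (∀ p ∈ TwSum ι Ω, |F p| ≤ MF * tnorm ι Ω p) →
      (∀ x ∈ QDom ι Ω, F ((0:S), x) = α x) →
      (∀ y : Y, F (ι y, (0:X)) = g y) →
      ∀ x ∈ QDom ι Ω, |α x - B g ((0:S), x)| ≤ (MF + K * ‖g‖) * ‖x‖ := by
    intro α g F MF hF hFα hFg x hx
    obtain ⟨yx, hyx⟩ := hx
    have h1 : F (Ω x, x) = g yx + α x := by
      rw [hdiag F x yx hyx, hFg, hFα x ⟨yx, hyx⟩]
    have h2 : B g (Ω x, x) = g yx + B g ((0:S), x) := by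
      rw [hdiag (B g) x yx hyx, hBsel]
    have h3 : α x - B g ((0:S), x) = F (Ω x, x) - B g (Ω x, x) := by
      rw [h1, h2]; ring
    have h4 : |F (Ω x, x)| ≤ MF * ‖x‖ := by
      have := hF _ (htw_diag x); rwa [htn_diag] at this
    have h5 : |B g (Ω x, x)| ≤ K * ‖g‖ * ‖x‖ := by
      have := hBbdd g _ (htw_diag x); rwa [htn_diag] at this
    rw [h3]
    calc |F (Ω x, x) - B g (Ω x, x)| ≤ |F (Ω x, x)| + |B g (Ω x, x)| := abs_sub _ _
      _ ≤ MF * ‖x‖ + K * ‖g‖ * ‖x‖ := add_le_add h4 h5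
      _ = (MF + K * ‖g‖) * ‖x‖ := by ring
  have hfwd : ∀ (α : X →ₗ[ℝ] ℝ) (g : Y →L[ℝ] ℝ) (F : S × X →ₗ[ℝ] ℝ) (M : ℝ),
      (∀ x ∈ QDom ι Ω, |α x - B g ((0:S), x)| ≤ M * ‖x‖) →
      (∀ x ∈ QDom ι Ω, F ((0:S), x) = α x) →
      (∀ y : Y, F (ι y, (0:X)) = g y) →
      ∀ z ∈ QDom ι Ω, |F (Ω z, z)| ≤ (M + K * ‖g‖) * ‖z‖ := by
    intro α g F M hM hFα hFg z hz
    obtain ⟨yz, hyz⟩ := hz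
    have h1 : F (Ω z, z) = g yz + α z := by
      rw [hdiag F z yz hyz, hFg, hFα z ⟨yz, hyz⟩]
    have h2 : B g (Ω z, z) = g yz + B g ((0:S), z) := by
      rw [hdiag (B g) z yz hyz, hBsel]
    have h3 : F (Ω z, z) = (α z - B g ((0:S), z)) + B g (Ω z, z) := by
      rw [h1, h2]; ring
    have h5 : |B g (Ω z, z)| ≤ K * ‖g‖ * ‖z‖ := by
      have := hBbdd g _ (htw_diag z); rwa [htn_diag] at this
    rw [h3]
    calc |(α z - B g ((0:S), z)) + B g (Ω z, z)|
        ≤ |α z - B g ((0:S), z)| + |B g (Ω z, z)| := abs_add_le _ _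
      _ ≤ M * ‖z‖ + K * ‖g‖ * ‖z‖ := add_le_add (hM z ⟨yz, hyz⟩) h5
      _ = (M + K * ‖g‖) * ‖z‖ := by ring
  refine ⟨?_, ?_, ?_⟩
  · -- Part 1
    intro α g _hMα
    constructor
    · rintro ⟨M, hM⟩
      set Dsub : Submodule ℝ X :=
        { carrier := QDom ι Ω
          add_mem' := by
            rintro a b ⟨ya, hya⟩ ⟨yb, hyb⟩
            obtain ⟨y2, hy2⟩ := (hql2 a b).1
            exact ⟨y2 + ya + yb, by rw [map_add, map_add, hy2, hya, hyb]; abel⟩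
          zero_mem' := ⟨0, by rw [map_zero, hΩ0]⟩
          smul_mem' := by
            rintro c a ⟨ya, hya⟩
            exact ⟨c • ya, by rw [map_smul, hya, hhom]⟩ } with hDsub
      set φ : X →ₗ[ℝ] ℝ := α - (B g).comp (LinearMap.inr ℝ S X) with hφ
      have hφx : ∀ x : X, φ x = α x - B g ((0:S), x) := fun x => rfl
      set f : Dsub →ₗ[ℝ] ℝ := φ.comp Dsub.subtype with hf
      have hfb : ∀ v : Dsub, ‖f v‖ ≤ max M 0 * ‖v‖ := by
        intro v
        have hmem : (v : X) ∈ QDom ι Ω := v.2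
        have h2 : |φ (v : X)| ≤ M * ‖(v : X)‖ := by rw [hφx]; exact hM _ hmem
        calc ‖f v‖ = |φ (v : X)| := rfl
          _ ≤ M * ‖(v : X)‖ := h2
          _ ≤ max M 0 * ‖(v : X)‖ :=
              mul_le_mul_of_nonneg_right (le_max_left M 0) (norm_nonneg _)
          _ = max M 0 * ‖v‖ := rfl
      set fc : Dsub →L[ℝ] ℝ := LinearMap.mkContinuous f (max M 0) hfb with hfc
      obtain ⟨ψ, hψeq, hψnorm⟩ := exists_extension_norm_eq Dsub fc
      have hψle : ‖ψ‖ ≤ max M 0 := by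
        rw [hψnorm]; exact LinearMap.mkContinuous_norm_le f (le_max_right M 0) hfb
      refine ⟨B g + (ψ : X →ₗ[ℝ] ℝ).comp (LinearMap.snd ℝ S X),
        ⟨K * ‖g‖ + max M 0, ?_⟩, ?_, ?_⟩
      · intro p hp
        have h1 : |B g p| ≤ K * ‖g‖ * tnorm ι Ω p := hBbdd g p hp
        have h3 : ‖p.2‖ ≤ tnorm ι Ω p := le_add_of_nonneg_left (hYnn _)
        have h2 : |ψ p.2| ≤ max M 0 * tnorm ι Ω p := by
          calc |ψ p.2| = ‖ψ p.2‖ := rfl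
            _ ≤ ‖ψ‖ * ‖p.2‖ := ψ.le_opNorm p.2
            _ ≤ max M 0 * tnorm ι Ω p :=
                mul_le_mul hψle h3 (norm_nonneg _) (le_max_right M 0)
        have happ : (B g + (ψ : X →ₗ[ℝ] ℝ).comp (LinearMap.snd ℝ S X)) p
            = B g p + ψ p.2 := rfl
        rw [happ]
        calc |B g p + ψ p.2| ≤ |B g p| + |ψ p.2| := abs_add_le _ _
          _ ≤ K * ‖g‖ * tnorm ι Ω p + max M 0 * tnorm ι Ω p := add_le_add h1 h2
          _ = (K * ‖g‖ + max M 0) * tnorm ι Ω p := by ring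
      · intro x hx
        have hψx : ψ x = α x - B g ((0:S), x) := by
          have h := hψeq ⟨x, hx⟩
          have h2 : fc (⟨x, hx⟩ : Dsub) = φ x := rfl
          rw [h2] at h
          rw [h, hφx]
        have happ : (B g + (ψ : X →ₗ[ℝ] ℝ).comp (LinearMap.snd ℝ S X)) ((0:S), x)
            = B g ((0:S), x) + ψ x := rfl
        rw [happ, hψx]; ring
      · intro y
        have happ : (B g + (ψ : X →ₗ[ℝ] ℝ).comp (LinearMap.snd ℝ S X)) (ι y, (0:X))
            = B g (ι y, (0:X)) + ψ (0:X) := rfl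
        rw [happ, hBsel, map_zero, add_zero]
    · rintro ⟨F, ⟨M', hF⟩, hFα, hFg⟩
      exact ⟨M' + K * ‖g‖, hback α g F M' hF hFα hFg⟩
  · -- Part 2
    rintro F₁ F₂ ⟨M₁, h₁⟩ ⟨M₂, h₂⟩ hdom hYeq p hp
    set G : S × X →ₗ[ℝ] ℝ := F₁ - F₂ with hG
    have hGapp : ∀ q : S × X, G q = F₁ q - F₂ q := fun q => rfl
    have hGy : ∀ y : Y, G (ι y, (0:X)) = 0 := by
      intro y; rw [hGapp, hYeq y, sub_self]
    have hGz : ∀ z ∈ QDom ι Ω, G (Ω z, z) = 0 := by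
      intro z hz
      obtain ⟨yz, hyz⟩ := hz
      rw [hdiag G z yz hyz, hGy, hGapp, hdom z ⟨yz, hyz⟩, sub_self, add_zero]
    have hGr : ∀ r : X, |G (Ω r, r)| ≤ (|M₁| + |M₂|) * ‖r‖ := by
      intro r
      have h1' := h₁ _ (htw_diag r)
      have h2' := h₂ _ (htw_diag r)
      rw [htn_diag] at h1' h2'
      have hr1 : M₁ * ‖r‖ ≤ |M₁| * ‖r‖ :=
        mul_le_mul_of_nonneg_right (le_abs_self M₁) (norm_nonneg r)
      have hr2 : M₂ * ‖r‖ ≤ |M₂| * ‖r‖ :=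
        mul_le_mul_of_nonneg_right (le_abs_self M₂) (norm_nonneg r)
      rw [hGapp]
      calc |F₁ (Ω r, r) - F₂ (Ω r, r)| ≤ |F₁ (Ω r, r)| + |F₂ (Ω r, r)| := abs_sub _ _
        _ ≤ (|M₁| + |M₂|) * ‖r‖ := by nlinarith
    have hkey : ∀ x : X, G (Ω x, x) = 0 := by
      intro x
      have h := core_estimate ι hinj Ω C hql2 hdense G 0 0 (|M₁| + |M₂|) le_rfl le_rfl
        (fun z hz => by rw [hGz z hz]; simp) (fun y => by rw [hGy]; simp) hGr x
      have h0 : |G (Ω x, x)| ≤ 0 := by simpa using h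
      exact abs_eq_zero.mp (le_antisymm h0 (abs_nonneg _))
    obtain ⟨y, hy⟩ := hp
    have h1 : p.1 = ι y + Ω p.2 := by rw [hy]; abel
    have hsplit : p = ((ι y, (0:X)) : S × X) + (Ω p.2, p.2) := by
      have h2 : ((ι y, (0:X)) : S × X) + (Ω p.2, p.2) = (ι y + Ω p.2, 0 + p.2) := rfl
      rw [h2, ← h1, zero_add]
    have hGp : G p = 0 := by
      have h3 : G p = G (ι y, (0:X)) + G (Ω p.2, p.2) := by
        conv_lhs => rw [hsplit]
        exact map_add G _ _
      rw [h3, hGy, hkey, add_zero]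
    have := hGapp p
    rw [hGp] at this
    exact (sub_eq_zero.mp this.symm)
  · -- Part 3
    refine ⟨1 + K + |C|, by positivity, ?_⟩
    intro α g F M MF hM0 hMF0 hα hF hFα hFg
    have habs : (0:ℝ) ≤ |C| := abs_nonneg C
    constructor
    · have hz := hfwd α g F M hα hFα hFg
      have hr : ∀ r : X, |F (Ω r, r)| ≤ MF * ‖r‖ := by
        intro r; have := hF _ (htw_diag r); rwa [htn_diag] at this
      have hyb : ∀ y : Y, |F (ι y, (0:X))| ≤ ‖g‖ * ‖y‖ := by
        intro y; rw [hFg]; exact g.le_opNorm y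
      have hkey := core_estimate ι hinj Ω C hql2 hdense F (M + K * ‖g‖) ‖g‖ MF
        (by positivity) (norm_nonneg g) hz hyb hr
      intro p hp
      obtain ⟨y, hy⟩ := hp
      have h1 : p.1 = ι y + Ω p.2 := by rw [hy]; abel
      have hsplit : p = ((ι y, (0:X)) : S × X) + (Ω p.2, p.2) := by
        have h2 : ((ι y, (0:X)) : S × X) + (Ω p.2, p.2) = (ι y + Ω p.2, 0 + p.2) := rfl
        rw [h2, ← h1, zero_add]
      have hFp : F p = F (ι y, (0:X)) + F (Ω p.2, p.2) := by
        conv_lhs => rw [hsplit]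
        exact map_add F _ _
      have hyn : ‖y‖ = Ynorm ι (p.1 - Ω p.2) := by rw [← hy, Ynorm_eq ι hinj]
      have hbd : |F p| ≤ ‖g‖ * Ynorm ι (p.1 - Ω p.2)
          + ((M + K * ‖g‖) + ‖g‖ * |C|) * ‖p.2‖ := by
        rw [hFp]
        refine (abs_add_le _ _).trans (add_le_add ?_ (hkey p.2))
        rw [← hyn]; exact hyb y
      have htn : tnorm ι Ω p = Ynorm ι (p.1 - Ω p.2) + ‖p.2‖ := rfl
      have hYn : 0 ≤ Ynorm ι (p.1 - Ω p.2) := hYnn _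
      have hc1 : ‖g‖ ≤ (1 + K + |C|) * (M + ‖g‖) := by
        nlinarith [mul_nonneg hK.le (norm_nonneg g), mul_nonneg habs (norm_nonneg g),
          mul_nonneg hK.le hM0, mul_nonneg habs hM0, norm_nonneg g]
      have hc2 : (M + K * ‖g‖) + ‖g‖ * |C| ≤ (1 + K + |C|) * (M + ‖g‖) := by
        nlinarith [mul_nonneg hK.le hM0, mul_nonneg habs hM0, norm_nonneg g]
      calc |F p| ≤ ‖g‖ * Ynorm ι (p.1 - Ω p.2) + ((M + K * ‖g‖) + ‖g‖ * |C|) * ‖p.2‖ := hbd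
        _ ≤ (1 + K + |C|) * (M + ‖g‖) * Ynorm ι (p.1 - Ω p.2)
            + (1 + K + |C|) * (M + ‖g‖) * ‖p.2‖ :=
            add_le_add (mul_le_mul_of_nonneg_right hc1 hYn)
              (mul_le_mul_of_nonneg_right hc2 (norm_nonneg _))
        _ = (1 + K + |C|) * (M + ‖g‖) * tnorm ι Ω p := by rw [htn]; ring
    · refine ⟨MF + K * ‖g‖, ?_, hback α g F MF hF hFα hFg⟩
      nlinarith [mul_nonneg hK.le hMF0, mul_nonneg habs hMF0,
        mul_nonneg habs (norm_nonneg g), norm_nonneg g, hK.le, hMF0]
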